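/- arXiv:2006.01941 — 4 statements merged into one kernel-verified Lean document; each statement's English description precedes it below -/
import Mathlib

section
/- Let n be even, f(x) = x^{2^n−2} on F_{2^n}, and {x1,x2,x3,x4} a vanishing flat of f. Then one of the xi equals 0. -/
/-! In characteristic 2 a vanishing flat has `x₄ = x₁ + x₂ + x₃`. If no `xᵢ` is zero, `f` is
inversion, and clearing denominators in `x₁⁻¹ + x₂⁻¹ + x₃⁻¹ = (x₁ + x₂ + x₃)⁻¹` leaves
`(x₁ + x₂)(x₂ + x₃)(x₃ + x₁) = 0`, so two of the points coincide. -/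

theorem FiniteField.pow_card_sub_two_eq_inv {K : Type*} [Field K] [Fintype K] {x : K}
    (hx : x ≠ 0) : x ^ (Fintype.card K - 2) = x⁻¹ := by
  have hcard : 2 ≤ Fintype.card K := Fintype.one_lt_card
  refine eq_inv_of_mul_eq_one_left ?_
  rw [← pow_succ, show Fintype.card K - 2 + 1 = Fintype.card K - 1 by omega]
  exact FiniteField.pow_card_sub_one_eq_one x hx

theorem add_mul_add_mul_add_eq_zero_of_inv_add_inv_add_inv_eq_inv {K : Type*} [Field K]
    {a b c : K} (ha : a ≠ 0) (hb : b ≠ 0) (hc : c ≠ 0) (habc : a + b + c ≠ 0)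
    (h : a⁻¹ + b⁻¹ + c⁻¹ = (a + b + c)⁻¹) : (a + b) * (b + c) * (c + a) = 0 := by
  field_simp at h
  linear_combination h

theorem vf_inverse_contains_zero_general {K : Type*} [Field K] [Fintype K]
    (n : ℕ) (hcard : Fintype.card K = 2 ^ n) [CharP K 2]
    (x1 x2 x3 x4 : K)
    (h12 : x1 ≠ x2) (h13 : x1 ≠ x3)
    (h23 : x2 ≠ x3)
    (hsum : x1 + x2 + x3 + x4 = 0)
    (hfsum : x1 ^ (2 ^ n - 2) + x2 ^ (2 ^ n - 2) + x3 ^ (2 ^ n - 2) + x4 ^ (2 ^ n - 2) = 0) :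
    x1 = 0 ∨ x2 = 0 ∨ x3 = 0 ∨ x4 = 0 := by
  by_contra! hzero
  obtain ⟨h1, h2, h3, h4⟩ := hzero
  simp only [← hcard, FiniteField.pow_card_sub_two_eq_inv, h1, h2, h3, h4, ne_eq,
    not_false_eq_true] at hfsum
  obtain rfl : x1 + x2 + x3 = x4 := CharTwo.add_eq_zero.mp hsum
  have hfactor := add_mul_add_mul_add_eq_zero_of_inv_add_inv_add_inv_eq_inv h1 h2 h3 h4
    (CharTwo.add_eq_zero.mp hfsum)
  simp only [mul_eq_zero, CharTwo.add_eq_zero] at hfactor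
  rcases hfactor with (h | h) | h
  · exact h12 h
  · exact h23 h
  · exact h13 h.symm

theorem vf_inverse_contains_zero {K : Type*} [Field K] [Fintype K] [DecidableEq K]
    (n : ℕ) (hn : 0 < n) (hneven : Even n) (hcard : Fintype.card K = 2 ^ n) [CharP K 2]
    (x1 x2 x3 x4 : K)
    (h12 : x1 ≠ x2) (h13 : x1 ≠ x3) (h14 : x1 ≠ x4)
    (h23 : x2 ≠ x3) (h24 : x2 ≠ x4) (h34 : x3 ≠ x4)
    (hsum : x1 + x2 + x3 + x4 = 0)
    (hfsum : x1 ^ (2 ^ n - 2) + x2 ^ (2 ^ n - 2) + x3 ^ (2 ^ n - 2) + x4 ^ (2 ^ n - 2) = 0) :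
    x1 = 0 ∨ x2 = 0 ∨ x3 = 0 ∨ x4 = 0 :=
  vf_inverse_contains_zero_general n hcard x1 x2 x3 x4 h12 h13 h23 hsum hfsum
end

section
/- Let f(x) = x^{2^t+1} on F_{2^n} with s = gcd(n,t) > 1. Then the number of vanishing flats of f equals 2^{n−2}(2^{s−1}−1)(2^n−1)/3. -/
/-!
In characteristic 2, three distinct points `x, y, z` span the flat `{x, y, z, x + y + z}`, so
`24 · |VF f|` counts the ordered triples of distinct points whose flat is `f`-vanishing.
For the Gold function `f x = x ^ (2 ^ t + 1)` the sum of `f` over that flat is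
`a ^ 2 ^ t * b + a * b ^ 2 ^ t` with `a = x + y`, `b = x + z`; for `a ≠ 0` it vanishes iff
`b / a` is fixed by `c ↦ c ^ 2 ^ t`, i.e. lies in the subfield of order `2 ^ gcd n t`.
The triples are therefore parametrised by `x ∈ K`, `a ≠ 0` and `b / a` in that subfield
minus `{0, 1}`, which gives
`24 · |VF f| = 2 ^ n (2 ^ n - 1) (2 ^ gcd n t - 2)`.
-/

def VF {K : Type*} [Field K] [Fintype K] [DecidableEq K] (f : K → K) : Finset (Finset K) :=
  Finset.univ.filter (fun s => s.card = 4 ∧ s.sum id = 0 ∧ s.sum f = 0)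

open Finset Polynomial Function

lemma pow_pow_eq_self_iff_pow_pow_gcd_eq_self {M : Type*} [Monoid M] {p n : ℕ} {c : M}
    (hc : c ^ p ^ n = c) (t : ℕ) : c ^ p ^ t = c ↔ c ^ p ^ n.gcd t = c := by
  have periodic_iff (k : ℕ) : IsPeriodicPt (· ^ p) k c ↔ c ^ p ^ k = c := by
    rw [IsPeriodicPt, IsFixedPt, pow_iterate]
  simp only [← periodic_iff] at hc ⊢
  exact ⟨hc.gcd, fun h => h.trans_dvd (Nat.gcd_dvd_right n t)⟩

lemma X_pow_pow_sub_X_dvd {R : Type*} [CommRing R] {p m n : ℕ} (hp : 0 < p) (hmn : m ∣ n) :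
    (X ^ p ^ m - X : R[X]) ∣ X ^ p ^ n - X := by
  have factor (k : ℕ) : (X ^ p ^ k - X : R[X]) = X * (X ^ (p ^ k - 1) - 1) := by
    rw [mul_sub, mul_one, ← pow_succ', Nat.sub_add_cancel (Nat.one_le_pow _ _ hp)]
  rw [factor, factor]
  exact mul_dvd_mul_left X (dvd_pow_sub_one_of_dvd (Nat.pow_sub_one_dvd_pow_sub_one p hmn))

namespace FiniteField

variable {K : Type*} [Field K] [Fintype K] [DecidableEq K] {p n : ℕ} [CharP K p]

lemma card_filter_pow_pow_eq_self_of_dvd (hcard : Fintype.card K = p ^ n) {m : ℕ}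
    (hmn : m ∣ n) : #{c : K | c ^ p ^ m = c} = p ^ m := by
  have hK : 1 < Fintype.card K := Fintype.one_lt_card
  have h1 : 1 < p ^ n := hcard ▸ hK
  have hn : n ≠ 0 := by rintro rfl; simp at h1
  have hp : 1 < p := (Nat.one_lt_pow_iff hn).mp h1
  have hm : m ≠ 0 := by rintro rfl; exact hn (Nat.eq_zero_of_zero_dvd hmn)
  set P : K[X] := X ^ p ^ m - X
  have hP : P ≠ 0 := X_pow_card_pow_sub_X_ne_zero K hm hp
  have hsplit_univ : (X ^ p ^ n - X : K[X]).Splits := by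
    rw [splits_iff_card_roots, ← hcard, roots_X_pow_card_sub_X,
      X_pow_card_sub_X_natDegree_eq K hK]
    exact card_univ
  have hsplit : P.Splits := hsplit_univ.of_dvd
    (hcard ▸ X_pow_card_sub_X_ne_zero K hK) (X_pow_pow_sub_X_dvd (by omega) hmn)
  have hnodup : P.roots.Nodup := nodup_roots (galois_poly_separable p _ (dvd_pow_self p hm))
  have hroots : ({c : K | c ^ p ^ m = c} : Finset K) = P.roots.toFinset := by
    ext c
    simp [P, mem_roots hP, sub_eq_zero]
  rw [hroots, Multiset.toFinset_card_of_nodup hnodup, ← hsplit.natDegree_eq_card_roots,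
    X_pow_card_pow_sub_X_natDegree_eq K hm hp]

lemma card_filter_pow_pow_eq_self (hcard : Fintype.card K = p ^ n) (t : ℕ) :
    #{c : K | c ^ p ^ t = c} = p ^ n.gcd t := by
  have hc (c : K) : c ^ p ^ n = c := hcard ▸ pow_card c
  rw [filter_congr fun c _ => pow_pow_eq_self_iff_pow_pow_gcd_eq_self (hc c) t]
  exact card_filter_pow_pow_eq_self_of_dvd hcard (Nat.gcd_dvd_left n t)

end FiniteField

section DistinctTriples

variable {α : Type*} [DecidableEq α]

def distinctTriples (S : Finset α) : Finset (α × α × α) :=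
  {p ∈ S ×ˢ S ×ˢ S | p.1 ≠ p.2.1 ∧ p.1 ≠ p.2.2 ∧ p.2.1 ≠ p.2.2}

lemma card_distinctTriples (S : Finset α) :
    #(distinctTriples S) = #S * (#S - 1) * (#S - 2) := by
  have fiber (x : α) (hx : x ∈ S) :
      {p ∈ distinctTriples S | p.1 = x} = {x} ×ˢ (S.erase x).offDiag := by
    ext ⟨a, b, c⟩
    simp only [distinctTriples, mem_filter, mem_product, mem_singleton, mem_offDiag, mem_erase]
    constructor
    · rintro ⟨⟨⟨-, hb, hc⟩, hab, hac, hbc⟩, rfl⟩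
      exact ⟨rfl, ⟨Ne.symm hab, hb⟩, ⟨Ne.symm hac, hc⟩, hbc⟩
    · rintro ⟨rfl, ⟨hab, hb⟩, ⟨hac, hc⟩, hbc⟩
      exact ⟨⟨⟨hx, hb, hc⟩, Ne.symm hab, Ne.symm hac, hbc⟩, rfl⟩
  rw [card_eq_sum_card_fiberwise (s := distinctTriples S) (t := S) (f := Prod.fst)
      fun p hp => (mem_product.1 (mem_filter.1 hp).1).1,
    sum_congr rfl fun x hx => by
      rw [fiber x hx, card_product, card_singleton, one_mul, offDiag_card, card_erase_of_mem hx],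
    sum_const, smul_eq_mul, ← Nat.mul_sub_one, Nat.sub_sub, mul_assoc]

end DistinctTriples

def flat {K : Type*} [Add K] [DecidableEq K] (x y z : K) : Finset K := {x, y, z, x + y + z}

section CharTwo

variable {K : Type*} [CommRing K] [CharP K 2] [DecidableEq K]

lemma sum_flat {M : Type*} [AddCommMonoid M] (f : K → M) {x y z : K}
    (hxy : x ≠ y) (hxz : x ≠ z) (hyz : y ≠ z) :
    ∑ i ∈ flat x y z, f i = f x + f y + f z + f (x + y + z) := by
  have hx : x ≠ x + y + z := by rwa [add_assoc, Ne, left_eq_add, CharTwo.add_eq_zero]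
  have hy : y ≠ x + y + z := by rwa [add_right_comm, Ne, right_eq_add, CharTwo.add_eq_zero]
  have hz : z ≠ x + y + z := by rwa [Ne, right_eq_add, CharTwo.add_eq_zero]
  rw [flat, sum_insert (by simp [hxy, hxz, hx]), sum_insert (by simp [hyz, hy]), sum_pair hz]
  abel

lemma card_flat {x y z : K} (hxy : x ≠ y) (hxz : x ≠ z) (hyz : y ≠ z) : #(flat x y z) = 4 := by
  rw [card_eq_sum_ones, sum_flat _ hxy hxz hyz]

lemma eq_flat_of_card_eq_four {S : Finset K} (hS : #S = 4) (hsum : ∑ i ∈ S, i = 0)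
    {x y z : K} (hx : x ∈ S) (hy : y ∈ S) (hz : z ∈ S) (hxy : x ≠ y) (hxz : x ≠ z)
    (hyz : y ≠ z) : S = flat x y z := by
  have hsub : {x, y, z} ⊆ S := by simp [insert_subset_iff, hx, hy, hz]
  obtain ⟨w, hw⟩ : ∃ w, S \ {x, y, z} = {w} := card_eq_one.1 <| by
    rw [card_sdiff_of_subset hsub, hS, card_eq_three.2 ⟨x, y, z, hxy, hxz, hyz, rfl⟩]
  have hwS : w ∈ S := (mem_sdiff.1 (hw ▸ mem_singleton_self w)).1
  have hw_eq : w = x + y + z := by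
    have hsplit := sum_sdiff hsub (f := id)
    rw [hw, sum_singleton, sum_insert (by simp [hxy, hxz]), sum_pair hyz] at hsplit
    simp only [id, hsum] at hsplit
    rw [← CharTwo.add_eq_zero, ← hsplit]
    ring
  subst hw_eq
  exact (eq_of_subset_of_card_le (by simp [flat, insert_subset_iff, hx, hy, hz, hwS])
    (by rw [hS, card_flat hxy hxz hyz])).symm

end CharTwo

lemma gold_flat_sum_eq {K : Type*} [CommRing K] [CharP K 2] (t : ℕ) (x y z : K) :
    x ^ (2 ^ t + 1) + y ^ (2 ^ t + 1) + z ^ (2 ^ t + 1) + (x + y + z) ^ (2 ^ t + 1)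
      = (x + y) ^ 2 ^ t * (x + z) + (x + y) * (x + z) ^ 2 ^ t := by
  have : Fact (Nat.Prime 2) := ⟨Nat.prime_two⟩
  simp only [pow_succ, add_pow_char_pow]
  linear_combination (y ^ 2 ^ t * y + z ^ 2 ^ t * z) * CharTwo.two_eq_zero (R := K)

lemma gold_form_eq_zero_iff {K : Type*} [Field K] [CharP K 2] (q : ℕ) {a : K} (ha : a ≠ 0)
    (b : K) : a ^ q * b + a * b ^ q = 0 ↔ (b / a) ^ q = b / a := by
  have factor : a ^ q * b + a * b ^ q = a ^ (q + 1) * ((b / a) ^ q + b / a) := by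
    rw [div_pow]
    field_simp
    ring
  rw [factor, mul_eq_zero_iff_left (pow_ne_zero _ ha), CharTwo.add_eq_zero]

section VanishingTriples

variable {K : Type*} [Field K] [Fintype K] [DecidableEq K]

def vanishingTriples (f : K → K) : Finset (K × K × K) :=
  {p ∈ distinctTriples univ | f p.1 + f p.2.1 + f p.2.2 + f (p.1 + p.2.1 + p.2.2) = 0}

lemma mem_vanishingTriples (f : K → K) {x y z : K} :
    (x, y, z) ∈ vanishingTriples f ↔
      (x ≠ y ∧ x ≠ z ∧ y ≠ z) ∧ f x + f y + f z + f (x + y + z) = 0 := by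
  simp only [vanishingTriples, distinctTriples, mem_filter, mem_product, mem_univ, true_and]

variable [CharP K 2]

lemma card_vanishingTriples (f : K → K) : #(vanishingTriples f) = #(VF f) * 24 := by
  have mapsTo : ∀ p ∈ vanishingTriples f, flat p.1 p.2.1 p.2.2 ∈ VF f := by
    rintro ⟨x, y, z⟩ hp
    obtain ⟨⟨hxy, hxz, hyz⟩, hf⟩ := (mem_vanishingTriples f).1 hp
    simp only [VF, mem_filter, mem_univ, true_and, card_flat hxy hxz hyz,
      sum_flat _ hxy hxz hyz, hf, id, and_true]
    exact CharTwo.add_self_eq_zero _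
  have fiber : ∀ S ∈ VF f,
      {p ∈ vanishingTriples f | flat p.1 p.2.1 p.2.2 = S} = distinctTriples S := by
    intro S hS
    simp only [VF, mem_filter, mem_univ, true_and] at hS
    obtain ⟨hS4, hSid, hSf⟩ := hS
    ext ⟨x, y, z⟩
    simp only [mem_filter, mem_vanishingTriples, distinctTriples, mem_product]
    constructor
    · rintro ⟨⟨⟨hxy, hxz, hyz⟩, -⟩, rfl⟩
      simp [flat, hxy, hxz, hyz]
    · rintro ⟨⟨hx, hy, hz⟩, hxy, hxz, hyz⟩
      have hflat := eq_flat_of_card_eq_four hS4 hSid hx hy hz hxy hxz hyz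
      refine ⟨⟨⟨hxy, hxz, hyz⟩, ?_⟩, hflat.symm⟩
      rwa [hflat, sum_flat _ hxy hxz hyz] at hSf
  rw [card_eq_sum_card_fiberwise mapsTo, sum_congr rfl fun S hS => by
    rw [fiber S hS, card_distinctTriples, (mem_filter.1 hS).2.1], sum_const, smul_eq_mul]

lemma mem_vanishingTriples_gold (t : ℕ) {x y z : K} :
    (x, y, z) ∈ vanishingTriples (fun x : K => x ^ (2 ^ t + 1)) ↔
      (x ≠ y ∧ x ≠ z ∧ y ≠ z) ∧ (x + y) ^ 2 ^ t * (x + z) + (x + y) * (x + z) ^ 2 ^ t = 0 := by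
  rw [mem_vanishingTriples, gold_flat_sum_eq]

lemma card_vanishingTriples_gold (t : ℕ) :
    #(vanishingTriples fun x : K => x ^ (2 ^ t + 1))
      = Fintype.card K * ((Fintype.card K - 1) * (#{c : K | c ^ 2 ^ t = c} - 2)) := by
  set Fix : Finset K := {c : K | c ^ 2 ^ t = c}
  have h01 : {0, 1} ⊆ Fix := by simp [Fix, insert_subset_iff]
  have htarget : #((univ : Finset K) ×ˢ (univ : Finset K).erase 0 ×ˢ (Fix \ {0, 1}))
      = Fintype.card K * ((Fintype.card K - 1) * (#Fix - 2)) := by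
    rw [card_product, card_product, card_univ, card_erase_of_mem (mem_univ 0), card_univ,
      card_sdiff_of_subset h01, card_pair zero_ne_one]
  rw [← htarget]
  refine card_nbij' (fun p => (p.1, p.1 + p.2.1, (p.1 + p.2.2) / (p.1 + p.2.1)))
    (fun p => (p.1, p.1 + p.2.1, p.1 + p.2.1 * p.2.2)) ?_ ?_ ?_ ?_
  · rintro ⟨x, y, z⟩ hp
    obtain ⟨⟨hxy, hxz, hyz⟩, hgold⟩ := (mem_vanishingTriples_gold t).1 hp
    have ha : x + y ≠ 0 := fun h => hxy (CharTwo.add_eq_zero.1 h)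
    have hb : x + z ≠ 0 := fun h => hxz (CharTwo.add_eq_zero.1 h)
    simp only [mem_coe, mem_product, mem_univ, mem_erase, mem_sdiff, mem_insert, mem_singleton,
      Fix, mem_filter, true_and, and_true]
    refine ⟨ha, (gold_form_eq_zero_iff _ ha _).1 hgold, ?_⟩
    rw [div_eq_one_iff_eq ha, div_eq_zero_iff]
    exact not_or.2 ⟨not_or.2 ⟨hb, ha⟩, fun h => hyz (add_left_cancel h).symm⟩
  · rintro ⟨x, a, c⟩ hp
    simp only [mem_coe, mem_product, mem_univ, mem_erase, mem_sdiff, mem_insert, mem_singleton,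
      Fix, mem_filter, true_and, and_true] at hp
    obtain ⟨ha, hc, hc01⟩ := hp
    obtain ⟨hc0, hc1⟩ := not_or.1 hc01
    rw [mem_coe, mem_vanishingTriples_gold, CharTwo.add_cancel_left, CharTwo.add_cancel_left]
    refine ⟨⟨?_, ?_, ?_⟩, ?_⟩
    · exact fun h => ha (left_eq_add.1 h)
    · exact fun h => mul_ne_zero ha hc0 (left_eq_add.1 h)
    · exact fun h => hc1 (mul_left_cancel₀ ha ((add_left_cancel h).symm.trans (mul_one a).symm))
    · rwa [gold_form_eq_zero_iff _ ha, mul_div_cancel_left₀ _ ha]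
  · rintro ⟨x, y, z⟩ hp
    have ha : x + y ≠ 0 := fun h => ((mem_vanishingTriples_gold t).1 hp).1.1
      (CharTwo.add_eq_zero.1 h)
    simp only [CharTwo.add_cancel_left, mul_div_cancel₀ _ ha]
  · rintro ⟨x, a, c⟩ hp
    simp only [mem_coe, mem_product, mem_erase] at hp
    simp only [CharTwo.add_cancel_left, mul_div_cancel_left₀ _ hp.2.1.1]

end VanishingTriples

theorem card_vf_gold {K : Type*} [Field K] [Fintype K] [DecidableEq K]
    (n t : ℕ) (hn : 0 < n) (hcard : Fintype.card K = 2 ^ n) [CharP K 2]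
    (hs : 1 < Nat.gcd n t) :
    3 * (VF (fun x : K => x ^ (2 ^ t + 1))).card
      = 2 ^ (n - 2) * (2 ^ (Nat.gcd n t - 1) - 1) * (2 ^ n - 1) := by
  have hcount : #(VF fun x : K => x ^ (2 ^ t + 1)) * 24
      = 2 ^ n * ((2 ^ n - 1) * (2 ^ Nat.gcd n t - 2)) := by
    rw [← card_vanishingTriples, card_vanishingTriples_gold,
      FiniteField.card_filter_pow_pow_eq_self hcard, hcard]
  have hn2 : 2 ≤ n := hs.trans_le (Nat.gcd_le_left t hn)
  have h4 : 2 ^ n = 4 * 2 ^ (n - 2) := by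
    rw [← pow_sub_mul_pow 2 hn2]
    ring
  have h2 : 2 ^ Nat.gcd n t - 2 = 2 * (2 ^ (Nat.gcd n t - 1) - 1) := by
    rw [Nat.mul_sub_one, ← pow_succ', Nat.sub_add_cancel hs.le]
  rw [h2] at hcount
  nth_rewrite 1 [h4] at hcount
  linarith
end

section
/- Let f(x) = Σ_{0 ≤ i < j < n} c_{ij} x^{2^i+2^j} be a DO polynomial over F_{2^n} and x1, x2 ∈ F_{2^n} distinct and nonzero with x1 ≠ x2. Then for every a ∈ F_{2^n}, the set {a, x1+a, x2+a, x1+x2+a} is a vanishing flat of f if and only if Σ_{0 ≤ i < j < n} c_{ij}(x1^{2^i} x2^{2^j} + x1^{2^j} x2^{2^i}) = 0. -/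
open Finset

theorem mem_VF_iff {K : Type*} [Field K] [Fintype K] [DecidableEq K] {f : K → K}
    {s : Finset K} : s ∈ VF f ↔ s.card = 4 ∧ s.sum id = 0 ∧ s.sum f = 0 := by
  simp [VF]

theorem AddMonoidHom.mul_second_difference {R : Type*} [CommRing R] (L M : R →+ R)
    (a x y : R) :
    L a * M a - L (x + a) * M (x + a) - L (y + a) * M (y + a)
        + L (x + y + a) * M (x + y + a) = L x * M y + L y * M x := by
  simp only [map_add]
  ring

namespace CharTwo

variable {R : Type*} [CommRing R] [CharP R 2]

theorem pow_two_pow_add_two_pow_second_difference (i j : ℕ) (a x y : R) :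
    a ^ (2 ^ i + 2 ^ j) + (x + a) ^ (2 ^ i + 2 ^ j) + (y + a) ^ (2 ^ i + 2 ^ j)
        + (x + y + a) ^ (2 ^ i + 2 ^ j) = x ^ 2 ^ i * y ^ 2 ^ j + x ^ 2 ^ j * y ^ 2 ^ i := by
  have := (iterateFrobenius R 2 i).toAddMonoidHom.mul_second_difference
    (iterateFrobenius R 2 j).toAddMonoidHom a x y
  rw [mul_comm (x ^ 2 ^ j)]
  simpa only [RingHom.toAddMonoidHom_eq_coe, AddMonoidHom.coe_coe, iterateFrobenius_def,
    ← pow_add, sub_eq_add] using this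

theorem sum_DO_second_difference (n : ℕ) (c : ℕ → ℕ → R) (f : R → R)
    (hf : ∀ z : R, f z = ∑ i ∈ range n, ∑ j ∈ range n,
      if i < j then c i j * z ^ (2 ^ i + 2 ^ j) else 0) (a x y : R) :
    f a + f (x + a) + f (y + a) + f (x + y + a) = ∑ i ∈ range n, ∑ j ∈ range n,
      if i < j then c i j * (x ^ 2 ^ i * y ^ 2 ^ j + x ^ 2 ^ j * y ^ 2 ^ i) else 0 := by
  simp only [hf, ← sum_add_distrib]
  refine sum_congr rfl fun i _ => sum_congr rfl fun j _ => ?_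
  split_ifs
  · rw [← mul_add, ← mul_add, ← mul_add, pow_two_pow_add_two_pow_second_difference]
  · simp only [add_zero]

variable [DecidableEq R] {x y : R}

theorem notMem_flat (hx : x ≠ 0) (hy : y ≠ 0) (hxy : x ≠ y) (a : R) :
    a ∉ ({x + a, y + a, x + y + a} : Finset R) ∧ x + a ∉ ({y + a, x + y + a} : Finset R) ∧
      y + a ∉ ({x + y + a} : Finset R) := by
  have hxy' : x + y ≠ 0 := fun h => hxy (CharTwo.add_eq_zero.1 h)
  simp [hx, hy, hxy, hxy']

theorem card_flat (hx : x ≠ 0) (hy : y ≠ 0) (hxy : x ≠ y) (a : R) :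
    ({a, x + a, y + a, x + y + a} : Finset R).card = 4 := by
  obtain ⟨h₁, h₂, h₃⟩ := notMem_flat hx hy hxy a
  rw [card_insert_of_notMem h₁, card_insert_of_notMem h₂, card_insert_of_notMem h₃,
    card_singleton]

theorem sum_flat {M : Type*} [AddCommMonoid M] (hx : x ≠ 0) (hy : y ≠ 0) (hxy : x ≠ y)
    (a : R) (g : R → M) :
    ∑ z ∈ ({a, x + a, y + a, x + y + a} : Finset R), g z
      = g a + g (x + a) + g (y + a) + g (x + y + a) := by
  obtain ⟨h₁, h₂, h₃⟩ := notMem_flat hx hy hxy a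
  rw [sum_insert h₁, sum_insert h₂, sum_insert h₃, sum_singleton]
  simp only [add_assoc]

end CharTwo

theorem vf_DO_criterion_general {K : Type*} [Field K] [Fintype K] [DecidableEq K]
    (n : ℕ) [CharP K 2]
    (c : ℕ → ℕ → K) (f : K → K)
    (hf : ∀ x : K, f x = ∑ i ∈ Finset.range n, ∑ j ∈ Finset.range n,
      if i < j then c i j * x ^ (2 ^ i + 2 ^ j) else 0)
    (x1 x2 : K) (hx1 : x1 ≠ 0) (hx2 : x2 ≠ 0) (hne : x1 ≠ x2) (a : K) :
    ({a, x1 + a, x2 + a, x1 + x2 + a} : Finset K) ∈ VF f ↔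
      ∑ i ∈ Finset.range n, ∑ j ∈ Finset.range n,
        (if i < j then c i j * (x1 ^ 2 ^ i * x2 ^ 2 ^ j + x1 ^ 2 ^ j * x2 ^ 2 ^ i) else 0)
        = 0 := by
  have hsum_id : a + (x1 + a) + (x2 + a) + (x1 + x2 + a) = 0 := by
    linear_combination (x1 + x2 + 2 * a) * (CharTwo.two_eq_zero : (2 : K) = 0)
  rw [mem_VF_iff, CharTwo.card_flat hx1 hx2 hne, CharTwo.sum_flat hx1 hx2 hne,
    CharTwo.sum_flat hx1 hx2 hne, CharTwo.sum_DO_second_difference n c f hf]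
  simp only [id, hsum_id, true_and]

theorem vf_DO_criterion {K : Type*} [Field K] [Fintype K] [DecidableEq K]
    (n : ℕ) (hn : 0 < n) (hcard : Fintype.card K = 2 ^ n) [CharP K 2]
    (c : ℕ → ℕ → K) (f : K → K)
    (hf : ∀ x : K, f x = ∑ i ∈ Finset.range n, ∑ j ∈ Finset.range n,
      if i < j then c i j * x ^ (2 ^ i + 2 ^ j) else 0)
    (x1 x2 : K) (hx1 : x1 ≠ 0) (hx2 : x2 ≠ 0) (hne : x1 ≠ x2) (a : K) :
    ({a, x1 + a, x2 + a, x1 + x2 + a} : Finset K) ∈ VF f ↔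
      ∑ i ∈ Finset.range n, ∑ j ∈ Finset.range n,
        (if i < j then c i j * (x1 ^ 2 ^ i * x2 ^ 2 ^ j + x1 ^ 2 ^ j * x2 ^ 2 ^ i) else 0)
        = 0 :=
  vf_DO_criterion_general n c f hf x1 x2 hx1 hx2 hne a
end

section
/- Let f(x) = x^{2^t+1} on F_{2^n} with gcd(2^t+1, 2^n−1) = 1 and s = gcd(n,t) > 1, and let α ∈ F_{2^n}*. Then for every c ∈ F_{2^n}, the image f(c + αF_{2^s}) is a coset of an s-dimensional F_2-subspace of F_{2^n}; moreover, for c, d ∈ F_{2^n}, the associated subspaces S_c = {f(c+u)+f(c) : u ∈ αF_{2^s}} and S_d satisfy S_c = S_d if c + d ∈ αF_{2^s}, and S_c ∩ S_d = {0} otherwise. -/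
/-!
Write `q = 2 ^ t`, `F = 𝔽_{2^s}` and `c = α γ`. Since `s ∣ t`, every `z ∈ F` has `z ^ q = z`, so
`f (c + α z) + f c = α ^ (q + 1) * (a * z + z ^ 2)` with `a = γ ^ q + γ`, which is additive in `z`;
as `f` is injective, `S_c` has `2 ^ s` elements. The coefficients `a` of `c` and `b` of `d = α δ`
agree iff `(γ + δ) ^ q = γ + δ`, i.e. iff `γ + δ ∈ F`, because `gcd n t = s`. If `a ≠ b`, apply the
trace `T` from `K` to `F` to `a z + z ^ 2 = b w + w ^ 2`: `T` kills `a` and `b`, being of the form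
`x ^ q + x`, and fixes `z ^ 2` and `w ^ 2` because `[K : F] = n / s` is odd, which is what
`gcd (2 ^ t + 1, 2 ^ n - 1) = 1` amounts to. Hence `z = w`, and then `z = 0`.
-/

open Finset Function

theorem Nat.odd_div_gcd_of_gcd_two_pow_add_one_two_pow_sub_one {n t : ℕ}
    (h : Nat.gcd (2 ^ t + 1) (2 ^ n - 1) = 1) : Odd (n / n.gcd t) := by
  set s := n.gcd t
  rcases Nat.eq_zero_or_pos s with hs | hs
  · obtain ⟨rfl, rfl⟩ := Nat.gcd_eq_zero_iff.mp hs
    simp at h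
  by_contra hev
  obtain ⟨j, hj⟩ := Nat.not_odd_iff_even.mp hev
  have ht : Odd (t / s) := by
    refine Nat.odd_iff.mpr (Nat.two_dvd_ne_zero.mp fun h2 => ?_)
    have := Nat.dvd_gcd (⟨j, by omega⟩ : 2 ∣ n / s) h2
    rw [Nat.coprime_div_gcd_div_gcd hs] at this
    omega
  have hdvd_t : 2 ^ s + 1 ∣ 2 ^ t + 1 := by
    have := ht.nat_add_dvd_pow_add_pow (2 ^ s) 1
    rwa [← pow_mul, Nat.mul_div_cancel' (Nat.gcd_dvd_right n t), one_pow] at this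
  have hdvd_n : 2 ^ s + 1 ∣ 2 ^ n - 1 := by
    have hsq : 2 ^ (s * 2) - 1 = (2 ^ s + 1) * (2 ^ s - 1) := by
      rw [pow_mul, ← Nat.sq_sub_sq, one_pow]
    refine (Dvd.intro _ hsq.symm).trans (Nat.pow_sub_one_dvd_pow_sub_one 2 ⟨j, ?_⟩)
    rw [← Nat.mul_div_cancel' (Nat.gcd_dvd_left n t), hj]; ring
  exact absurd (Nat.le_of_dvd one_pos (h ▸ Nat.dvd_gcd hdvd_t hdvd_n)) (by simp)

section PowPow
variable {M : Type*} [Monoid M] {p : ℕ} {x : M}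

theorem isPeriodicPt_pow_iff {k : ℕ} : IsPeriodicPt (· ^ p) k x ↔ x ^ p ^ k = x := by
  rw [IsPeriodicPt, IsFixedPt, pow_iterate]

theorem pow_pow_mul_eq_self {s : ℕ} (hx : x ^ p ^ s = x) (k : ℕ) : x ^ p ^ (s * k) = x :=
  isPeriodicPt_pow_iff.mp ((isPeriodicPt_pow_iff.mpr hx).mul_const k)

theorem pow_pow_eq_self_iff_pow_pow_gcd {n t : ℕ} (hx : x ^ p ^ n = x) :
    x ^ p ^ t = x ↔ x ^ p ^ n.gcd t = x := by
  simp only [← isPeriodicPt_pow_iff] at hx ⊢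
  exact ⟨hx.gcd, fun h => h.trans_dvd (Nat.gcd_dvd_right n t)⟩

end PowPow

section FiniteField
variable {K : Type*} [Field K]

theorem pow_left_injective_of_coprime {k : ℕ} (hk : k ≠ 0) (h : (Nat.card K - 1).Coprime k) :
    Injective (· ^ k : K → K) := by
  intro x y (hxy : x ^ k = y ^ k)
  rcases eq_or_ne x 0 with rfl | hx
  · exact ((pow_eq_zero_iff hk).mp (hxy.symm.trans (zero_pow hk))).symm
  rcases eq_or_ne y 0 with rfl | hy
  · exact (pow_eq_zero_iff hk).mp (hxy.trans (zero_pow hk))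
  have hunits := (Nat.card_units (α := K) ▸ h : (Nat.card Kˣ).Coprime k).pow_left_bijective.1
  exact congr_arg Units.val (hunits (a₁ := Units.mk0 x hx) (a₂ := Units.mk0 y hy) (Units.ext hxy))

theorem ncard_setOf_pow_eq_self [Finite K] {m : ℕ} (hm : m ≠ 0) :
    {z : K | z ^ m = z}.ncard = (Nat.card K - 1).gcd (m - 1) + 1 := by
  have hset : {z : K | z ^ m = z} =
      insert 0 (Units.val '' (powMonoidHom (m - 1) : Kˣ →* Kˣ).ker) := by
    ext z
    rcases eq_or_ne z 0 with rfl | hz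
    · simp [zero_pow hm]
    · have hpow : z ^ m = z ↔ z ^ (m - 1) = 1 := by
        conv_lhs => rw [← Nat.sub_add_cancel (Nat.one_le_iff_ne_zero.mpr hm), pow_succ]
        exact ⟨fun h => mul_right_cancel₀ hz (h.trans (one_mul z).symm),
          fun h => by rw [h, one_mul]⟩
      simp only [Set.mem_ofPred_eq, hpow, Set.mem_insert_iff, hz, false_or, Set.mem_image,
        SetLike.mem_coe, MonoidHom.mem_ker, powMonoidHom_apply]
      exact ⟨fun h => ⟨Units.mk0 z hz, Units.ext h, rfl⟩,
        fun ⟨u, hu, hz⟩ => hz ▸ congr_arg Units.val hu⟩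
  rw [hset, Set.ncard_insert_of_notMem (by simp),
    Set.ncard_image_of_injective _ Units.val_injective, ← Nat.card_coe_set_eq,
    SetLike.coe_sort_coe, IsCyclic.card_powMonoidHom_ker, Nat.card_units]

theorem ncard_setOf_pow_pow_eq_self [Finite K] {p n s : ℕ} (hp : 0 < p)
    (hcard : Nat.card K = p ^ n) (hs : s ∣ n) : {z : K | z ^ p ^ s = z}.ncard = p ^ s := by
  rw [ncard_setOf_pow_eq_self (pow_pos hp s).ne', hcard, Nat.pow_sub_one_gcd_pow_sub_one,
    Nat.gcd_eq_right hs, Nat.sub_add_cancel (Nat.one_le_pow _ _ hp)]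

end FiniteField

section RelTrace
variable {R : Type*} [CommRing R] (p s m : ℕ)

/-- The trace from `R` to the fixed points of `x ↦ x ^ p ^ s`, when `R` has degree `m` over
them, i.e. `x ^ p ^ (s * m) = x` on `R`. -/
def relTrace (x : R) : R := ∑ i ∈ range m, x ^ p ^ (s * i)

variable {p s m}

theorem relTrace_add [ExpChar R p] (x y : R) :
    relTrace p s m (x + y) = relTrace p s m x + relTrace p s m y := by
  simp only [relTrace, add_pow_expChar_pow, sum_add_distrib]

theorem relTrace_mul_of_pow_eq_self {y : R} (hy : y ^ p ^ s = y) (x : R) :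
    relTrace p s m (y * x) = y * relTrace p s m x := by
  simp only [relTrace, mul_pow, pow_pow_mul_eq_self hy, mul_sum]

theorem relTrace_of_pow_eq_self {y : R} (hy : y ^ p ^ s = y) : relTrace p s m y = m • y := by
  simp [relTrace, pow_pow_mul_eq_self hy]

theorem relTrace_pow_pow (hR : ∀ x : R, x ^ p ^ (s * m) = x) (x : R) :
    relTrace p s m (x ^ p ^ s) = relTrace p s m x := by
  have hshift : relTrace p s m (x ^ p ^ s) = ∑ i ∈ range m, x ^ p ^ (s * (i + 1)) := by
    simp only [relTrace, ← pow_mul, ← pow_add, mul_add_one, add_comm s]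
  apply add_right_cancel (b := x)
  calc relTrace p s m (x ^ p ^ s) + x = ∑ i ∈ range (m + 1), x ^ p ^ (s * i) := by
        rw [sum_range_succ', hshift]; simp
    _ = relTrace p s m x + x := by rw [sum_range_succ, hR]; rfl

theorem relTrace_pow_pow_mul (hR : ∀ x : R, x ^ p ^ (s * m) = x) (k : ℕ) (x : R) :
    relTrace p s m (x ^ p ^ (s * k)) = relTrace p s m x := by
  induction k with
  | zero => simp
  | succ k ih => rw [mul_add_one, pow_add, pow_mul, relTrace_pow_pow hR, ih]

end RelTrace

section CharTwo
variable {R : Type*} [CommRing R] {s m : ℕ}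

variable (s) in
def mulAddSqImage (a : R) : Set R := (fun z => a * z + z ^ 2) '' {z | z ^ 2 ^ s = z}

theorem zero_mem_mulAddSqImage (a : R) : (0 : R) ∈ mulAddSqImage s a :=
  ⟨0, by simp, by simp⟩

variable [CharP R 2]

theorem add_mem_mulAddSqImage {a x y : R} (hx : x ∈ mulAddSqImage s a)
    (hy : y ∈ mulAddSqImage s a) : x + y ∈ mulAddSqImage s a := by
  obtain ⟨z, hz, rfl⟩ := hx
  obtain ⟨w, hw, rfl⟩ := hy
  refine ⟨z + w, ?_, ?_⟩
  · simp only [Set.mem_ofPred_eq, add_pow_char_pow] at hz hw ⊢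
    rw [hz, hw]
  · simp only [add_pow_char]
    ring

theorem relTrace_pow_two_pow_add_self (hR : ∀ x : R, x ^ 2 ^ (s * m) = x) {t : ℕ} (hst : s ∣ t)
    (x : R) : relTrace 2 s m (x ^ 2 ^ t + x) = 0 := by
  obtain ⟨k, rfl⟩ := hst
  rw [relTrace_add, relTrace_pow_pow_mul hR, CharTwo.add_self_eq_zero]

theorem relTrace_of_pow_eq_self_of_odd (hm : Odd m) {y : R} (hy : y ^ 2 ^ s = y) :
    relTrace 2 s m y = y := by
  obtain ⟨r, rfl⟩ := hm
  rw [relTrace_of_pow_eq_self hy, add_nsmul, mul_nsmul', CharTwo.two_nsmul, zero_add,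
    one_nsmul]

theorem pow_two_pow_add_self_eq_iff {t : ℕ} {x y : R} :
    x ^ 2 ^ t + x = y ^ 2 ^ t + y ↔ (x + y) ^ 2 ^ t = x + y := by
  rw [add_pow_char_pow]
  constructor <;> intro h
  · linear_combination h + (y ^ 2 ^ t - x) * CharTwo.two_eq_zero (R := R)
  · linear_combination h + (x - y ^ 2 ^ t) * CharTwo.two_eq_zero (R := R)

theorem add_pow_two_pow_add_one_add_pow {t : ℕ} (x : R) {z : R} (hz : z ^ 2 ^ t = z) :
    (x + z) ^ (2 ^ t + 1) + x ^ (2 ^ t + 1) = (x ^ 2 ^ t + x) * z + z ^ 2 := by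
  rw [pow_succ, pow_succ, add_pow_char_pow, hz]
  linear_combination (x ^ 2 ^ t * x) * CharTwo.two_eq_zero (R := R)

end CharTwo

section Field
variable {K : Type*} [Field K] [CharP K 2] {s m : ℕ}

theorem relTrace_mul_add_sq (hm : Odd m) {a z : K} (ha : relTrace 2 s m a = 0)
    (hz : z ^ 2 ^ s = z) : relTrace 2 s m (a * z + z ^ 2) = z ^ 2 := by
  have hz2 : (z ^ 2) ^ 2 ^ s = z ^ 2 := by rw [← pow_mul, mul_comm, pow_mul, hz]
  rw [relTrace_add, mul_comm, relTrace_mul_of_pow_eq_self hz, ha, mul_zero, zero_add,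
    relTrace_of_pow_eq_self_of_odd hm hz2]

theorem mulAddSqImage_inter_eq_zero (hm : Odd m) {a b : K} (ha : relTrace 2 s m a = 0)
    (hb : relTrace 2 s m b = 0) (hab : a ≠ b) : mulAddSqImage s a ∩ mulAddSqImage s b = {0} := by
  refine Set.eq_singleton_iff_unique_mem.mpr
    ⟨⟨zero_mem_mulAddSqImage a, zero_mem_mulAddSqImage b⟩, ?_⟩
  rintro _ ⟨⟨z, hz, rfl⟩, ⟨w, hw, hzw : b * w + w ^ 2 = a * z + z ^ 2⟩⟩
  obtain rfl : w = z := CharTwo.sq_inj.mp <| by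
    rw [← relTrace_mul_add_sq hm hb hw, hzw, relTrace_mul_add_sq hm ha hz]
  have hw0 : (a - b) * w = 0 := by linear_combination -hzw
  simp [(mul_eq_zero.mp hw0).resolve_left (sub_ne_zero.mpr hab)]

theorem image_add_pow_two_pow_add_one_add_pow {t : ℕ} {α : K} (hα : α ≠ 0) (hst : s ∣ t) (c : K) :
    (fun u => (c + u) ^ (2 ^ t + 1) + c ^ (2 ^ t + 1)) '' ((α * ·) '' {z | z ^ 2 ^ s = z})
      = (α ^ (2 ^ t + 1) * ·) '' mulAddSqImage s ((c / α) ^ 2 ^ t + c / α) := by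
  obtain ⟨γ, rfl⟩ : ∃ γ, c = α * γ := ⟨c / α, (mul_div_cancel₀ c hα).symm⟩
  simp only [Set.image_image, mulAddSqImage, mul_div_cancel_left₀ γ hα]
  refine Set.image_congr fun z hz => ?_
  obtain ⟨k, rfl⟩ := hst
  rw [← mul_add, mul_pow, mul_pow, ← mul_add,
    add_pow_two_pow_add_one_add_pow γ (pow_pow_mul_eq_self hz k)]

theorem add_mem_image_mul_iff {n t : ℕ} (hK : ∀ x : K, x ^ 2 ^ n = x) {α : K} (hα : α ≠ 0)
    {c d : K} : c + d ∈ (α * ·) '' {z | z ^ 2 ^ n.gcd t = z} ↔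
      (c / α) ^ 2 ^ t + c / α = (d / α) ^ 2 ^ t + d / α := by
  rw [pow_two_pow_add_self_eq_iff, ← add_div, pow_pow_eq_self_iff_pow_pow_gcd (hK _)]
  constructor
  · rintro ⟨z, hz, hzcd : α * z = c + d⟩
    rwa [← hzcd, mul_div_cancel_left₀ z hα]
  · exact fun h => ⟨(c + d) / α, h, mul_div_cancel₀ _ hα⟩

end Field

theorem gold_skew_cover_general {K : Type*} [Field K] [Fintype K]
    (n t : ℕ) (hcard : Fintype.card K = 2 ^ n) [CharP K 2]
    (hperm : Nat.gcd (2 ^ t + 1) (2 ^ n - 1) = 1)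
    (α : K) (hα : α ≠ 0)
    (f : K → K) (hf : ∀ x : K, f x = x ^ (2 ^ t + 1))
    (Fα : Set K) (hFα : Fα = {w : K | ∃ z : K, z ^ (2 ^ Nat.gcd n t) = z ∧ w = α * z})
    (S : K → Set K) (hS : ∀ c : K, S c = {w : K | ∃ u ∈ Fα, w = f (c + u) + f c}) :
    (∀ c : K,
        Set.ncard (S c) = 2 ^ Nat.gcd n t ∧
        (0 : K) ∈ S c ∧
        (∀ u v : K, u ∈ S c → v ∈ S c → u + v ∈ S c) ∧
        f '' {x : K | ∃ u ∈ Fα, x = c + u} = {y : K | ∃ w ∈ S c, y = f c + w}) ∧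
      (∀ c d : K,
        (c + d ∈ Fα → S c = S d) ∧ (c + d ∉ Fα → S c ∩ S d = {0})) := by
  set s := n.gcd t
  have hsn : s ∣ n := Nat.gcd_dvd_left n t
  have hst : s ∣ t := Nat.gcd_dvd_right n t
  have hcard' : Nat.card K = 2 ^ n := Nat.card_eq_fintype_card.trans hcard
  have hK : ∀ x : K, x ^ 2 ^ n = x := fun x => hcard ▸ FiniteField.pow_card x
  have hKm : ∀ x : K, x ^ 2 ^ (s * (n / s)) = x := by rwa [Nat.mul_div_cancel' hsn]
  have hfinj : Injective f := by
    rw [show f = (· ^ (2 ^ t + 1)) from funext hf]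
    exact pow_left_injective_of_coprime (by positivity) (hcard' ▸ Nat.Coprime.symm hperm)
  have hFα' : Fα = (α * ·) '' {z | z ^ 2 ^ s = z} := by rw [hFα]; ext; simp [eq_comm]
  have hSf (c : K) : S c = (fun u => f (c + u) + f c) '' Fα := by rw [hS]; ext; simp [eq_comm]
  have hSq (c : K) :
      S c = (α ^ (2 ^ t + 1) * ·) '' mulAddSqImage s ((c / α) ^ 2 ^ t + c / α) := by
    rw [hSf, hFα', ← image_add_pow_two_pow_add_one_add_pow hα hst]
    simp only [hf]
  refine ⟨fun c => ⟨?_, ?_, ?_, ?_⟩, fun c d => ⟨fun h => ?_, fun h => ?_⟩⟩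
  · have hinj : Injective fun u => f (c + u) + f c :=
      fun u v h => add_left_cancel (hfinj (add_right_cancel h))
    rw [hSf, Set.ncard_image_of_injective _ hinj, hFα',
      Set.ncard_image_of_injective _ (mul_right_injective₀ hα),
      ncard_setOf_pow_pow_eq_self two_pos hcard' hsn]
  · rw [hSq]
    exact ⟨0, zero_mem_mulAddSqImage _, mul_zero _⟩
  · rw [hSq]
    rintro _ _ ⟨x, hx, rfl⟩ ⟨y, hy, rfl⟩
    exact ⟨x + y, add_mem_mulAddSqImage hx hy, mul_add _ _ _⟩
  · rw [hSf]
    ext y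
    simp [add_left_comm (f c), CharTwo.add_self_eq_zero, eq_comm]
  · rw [hSq, hSq, (add_mem_image_mul_iff hK hα).mp (hFα' ▸ h)]
  · rw [hSq, hSq, ← Set.image_inter (mul_right_injective₀ (pow_ne_zero _ hα)),
      mulAddSqImage_inter_eq_zero (Nat.odd_div_gcd_of_gcd_two_pow_add_one_two_pow_sub_one hperm)
        (relTrace_pow_two_pow_add_self hKm hst _) (relTrace_pow_two_pow_add_self hKm hst _)
        (mt (add_mem_image_mul_iff hK hα).mpr (hFα' ▸ h)),
      Set.image_singleton, mul_zero]

theorem gold_skew_cover {K : Type*} [Field K] [Fintype K] [DecidableEq K]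
    (n t : ℕ) (hn : 0 < n) (hcard : Fintype.card K = 2 ^ n) [CharP K 2]
    (hperm : Nat.gcd (2 ^ t + 1) (2 ^ n - 1) = 1) (hs : 1 < Nat.gcd n t)
    (α : K) (hα : α ≠ 0)
    (f : K → K) (hf : ∀ x : K, f x = x ^ (2 ^ t + 1))
    (Fα : Set K) (hFα : Fα = {w : K | ∃ z : K, z ^ (2 ^ Nat.gcd n t) = z ∧ w = α * z})
    (S : K → Set K) (hS : ∀ c : K, S c = {w : K | ∃ u ∈ Fα, w = f (c + u) + f c}) :
    (∀ c : K,
        Set.ncard (S c) = 2 ^ Nat.gcd n t ∧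
        (0 : K) ∈ S c ∧
        (∀ u v : K, u ∈ S c → v ∈ S c → u + v ∈ S c) ∧
        f '' {x : K | ∃ u ∈ Fα, x = c + u} = {y : K | ∃ w ∈ S c, y = f c + w}) ∧
      (∀ c d : K,
        (c + d ∈ Fα → S c = S d) ∧ (c + d ∉ Fα → S c ∩ S d = {0})) :=
  gold_skew_cover_general n t hcard hperm α hα f hf Fα hFα S hS
end
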